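/- arXiv:1208.5727 — 5 statements merged into one kernel-verified Lean document; each statement's English description precedes it below -/
import Mathlib

section
/- The function V is strictly decreasing on (0,∞) and tends to 0 as s → ∞; consequently V(s) > 0 for every s > 0. -/
open Real Filter

/-- The wall-interaction energy `V(s) = (1/π)·s·coth(πs) − (1/π²)·log(2·sinh(πs))`. -/
noncomputable def V (s : ℝ) : ℝ :=
  (1 / Real.pi) * s * (Real.cosh (Real.pi * s) / Real.sinh (Real.pi * s))
    - (1 / Real.pi ^ 2) * Real.log (2 * Real.sinh (Real.pi * s))

/-!
With `u = πs` we have `π² V(s) = g(u) := u coth u − log (2 sinh u)`, and `g'(u) = −u / sinh² u < 0`.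
Writing `t = 2u`, for `u > 0` one has `g(u) = t e⁻ᵗ / (1 − e⁻ᵗ) − log (1 − e⁻ᵗ)`, which tends to `0`.
A strictly decreasing function with limit `0` at infinity is positive.
-/

open Set Topology

theorem StrictAntiOn.lt_of_tendsto_atTop {α β : Type*} [SemilatticeSup α] [NoMaxOrder α]
    [Preorder β] [TopologicalSpace β] [OrderClosedTopology β] {f : α → β} {a : α} {l : β}
    (hf : StrictAntiOn f (Ioi a)) (hl : Tendsto f atTop (𝓝 l)) {x : α} (hx : a < x) :
    l < f x := by
  have : Nonempty α := ⟨x⟩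
  obtain ⟨y, hxy⟩ := exists_gt x
  have hy : a < y := hx.trans hxy
  have hly : l ≤ f y := by
    refine le_of_tendsto hl ?_
    filter_upwards [eventually_ge_atTop y] with t hyt
    exact hf.antitoneOn hy (hy.trans_le hyt) hyt
  exact hly.trans_lt (hf hx hy hxy)

noncomputable def wallProfile (u : ℝ) : ℝ := u * (cosh u / sinh u) - log (2 * sinh u)

theorem V_eq_wallProfile : V = fun s => wallProfile (π * s) / π ^ 2 := by
  ext s
  simp only [V, wallProfile]
  field_simp

theorem hasDerivAt_wallProfile {u : ℝ} (hu : u ≠ 0) :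
    HasDerivAt wallProfile (-u / sinh u ^ 2) u := by
  have hs : sinh u ≠ 0 := sinh_ne_zero.2 hu
  have h := ((hasDerivAt_id u).mul ((hasDerivAt_cosh u).div (hasDerivAt_sinh u) hs)).sub
    (((hasDerivAt_sinh u).const_mul 2).log (mul_ne_zero two_ne_zero hs))
  refine h.congr_deriv ?_
  simp only [Pi.div_apply, id_eq]
  field_simp
  linear_combination (-u) * cosh_sq_sub_sinh_sq u

theorem wallProfile_strictAntiOn : StrictAntiOn wallProfile (Ioi 0) := by
  refine strictAntiOn_of_deriv_neg (convex_Ioi 0) (fun u hu => ?_) fun u hu => ?_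
  · exact (hasDerivAt_wallProfile (ne_of_gt hu)).continuousAt.continuousWithinAt
  · rw [interior_Ioi] at hu
    have hs : 0 < sinh u := sinh_pos_iff.2 hu
    rw [(hasDerivAt_wallProfile (ne_of_gt hu)).deriv]
    exact div_neg_of_neg_of_pos (neg_neg_of_pos hu) (by positivity)

theorem wallProfile_eq {u : ℝ} (hu : 0 < u) :
    wallProfile u =
      2 * u * exp (-(2 * u)) / (1 - exp (-(2 * u))) - log (1 - exp (-(2 * u))) := by
  have hq : 0 < 1 - exp (-(2 * u)) := sub_pos.2 (exp_lt_one_iff.2 (by linarith))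
  have hs : sinh u ≠ 0 := (sinh_pos_iff.2 hu).ne'
  have hexp : exp u * exp (-u) = 1 := by rw [← exp_add, add_neg_cancel, exp_zero]
  have hexp2 : exp (-(2 * u)) = exp (-u) ^ 2 := by rw [← exp_nat_mul]; ring_nf
  have htwo_sinh : 2 * sinh u = exp u * (1 - exp (-(2 * u))) := by
    rw [sinh_eq, hexp2]; linear_combination exp (-u) * hexp
  have hcosh : cosh u = sinh u + exp (-u) := by rw [← cosh_sub_sinh]; ring
  have hcoth : u * exp (-u) / sinh u = 2 * u * exp (-(2 * u)) / (1 - exp (-(2 * u))) := by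
    rw [div_eq_div_iff hs hq.ne', hexp2]
    rw [hexp2] at htwo_sinh
    linear_combination (-u * exp (-u) ^ 2) * htwo_sinh + (u * exp (-u) ^ 3 - u * exp (-u)) * hexp
  rw [wallProfile, htwo_sinh, log_mul (exp_pos u).ne' hq.ne', log_exp, hcosh, ← hcoth]
  field_simp
  ring

theorem tendsto_mul_exp_neg_div_sub_log_atTop :
    Tendsto (fun t => t * exp (-t) / (1 - exp (-t)) - log (1 - exp (-t))) atTop (𝓝 0) := by
  have hq : Tendsto (fun t => 1 - exp (-t)) atTop (𝓝 1) := by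
    simpa using tendsto_exp_neg_atTop_nhds_zero.const_sub 1
  have hmul : Tendsto (fun t => t * exp (-t)) atTop (𝓝 0) := by
    simpa using tendsto_pow_mul_exp_neg_atTop_nhds_zero 1
  simpa using (hmul.div hq one_ne_zero).sub ((continuousAt_log one_ne_zero).tendsto.comp hq)

theorem tendsto_wallProfile_atTop : Tendsto wallProfile atTop (𝓝 0) := by
  refine (tendsto_mul_exp_neg_div_sub_log_atTop.comp
    (tendsto_id.const_mul_atTop two_pos)).congr' ?_
  filter_upwards [eventually_gt_atTop 0] with u hu
  rw [wallProfile_eq hu]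
  rfl

/-- `V` is strictly decreasing on `(0,∞)`, tends to `0` at infinity, and hence is
positive on `(0,∞)`. -/
theorem stmt1 :
    StrictAntiOn V (Set.Ioi 0) ∧
    Tendsto V atTop (nhds 0) ∧
    ∀ s : ℝ, 0 < s → 0 < V s := by
  have hanti : StrictAntiOn V (Ioi 0) := by
    intro a ha b hb hab
    rw [V_eq_wallProfile]
    exact div_lt_div_of_pos_right (wallProfile_strictAntiOn (mul_pos pi_pos ha)
      (mul_pos pi_pos hb) (mul_lt_mul_of_pos_left hab pi_pos)) (by positivity)
  have hlim : Tendsto V atTop (𝓝 0) := by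
    rw [V_eq_wallProfile, ← zero_div (π ^ 2)]
    exact (tendsto_wallProfile_atTop.comp (tendsto_id.const_mul_atTop pi_pos)).div_const _
  exact ⟨hanti, hlim, fun s hs => hanti.lt_of_tendsto_atTop hlim hs⟩
end

section
/- As s → 0⁺, V(s) + (1/π²)·log s converges to (1 − log(2π))/π²; that is, V(s) has the asymptotic behaviour V(s) ∼ (1 − log(2πs))/π² near s = 0. -/
/-!
Near `s = 0` both singular terms of `V` are governed by the difference quotient
`sinh(πs)/s → π`: `s·coth(πs) = cosh(πs) / (sinh(πs)/s) → 1/π`, and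
`log(2 sinh(πs)) − log s = log(2 sinh(πs)/s) → log(2π)`.
-/

open Real Filter Topology

theorem tendsto_sinh_mul_div_self (c : ℝ) :
    Tendsto (fun s => sinh (c * s) / s) (𝓝[≠] 0) (𝓝 c) := by
  have h : HasDerivAt (fun s => sinh (c * s)) c 0 := by
    simpa using ((hasDerivAt_id (0 : ℝ)).const_mul c).sinh
  simpa [slope_fun_def, div_eq_inv_mul] using h.tendsto_slope

theorem V_add_log_eq {s : ℝ} (hs : 0 < s) :
    V s + 1 / π ^ 2 * log s =
      1 / π * (cosh (π * s) / (sinh (π * s) / s)) - 1 / π ^ 2 * log (2 * (sinh (π * s) / s)) := by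
  have hsinh : 0 < sinh (π * s) := sinh_pos_iff.2 (mul_pos pi_pos hs)
  rw [← mul_div_assoc 2, log_div (by positivity) hs.ne', V]
  field_simp
  ring

/-- As `s → 0⁺`, `V(s) + (1/π²)·log s → (1 − log(2π))/π²`, i.e.
`V(s) ∼ (1 − log(2πs))/π²` near `s = 0`. -/
theorem stmt3 :
    Tendsto (fun s : ℝ => V s + (1 / Real.pi ^ 2) * Real.log s)
      (nhdsWithin 0 (Set.Ioi 0))
      (nhds ((1 - Real.log (2 * Real.pi)) / Real.pi ^ 2)) := by
  have hsinh : Tendsto (fun s => sinh (π * s) / s) (𝓝[>] 0) (𝓝 π) :=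
    (tendsto_sinh_mul_div_self π).mono_left (nhdsWithin_mono _ fun _ hs => ne_of_gt hs)
  have hcosh : Tendsto (fun s => cosh (π * s)) (𝓝[>] 0) (𝓝 1) := by
    have : Continuous fun s => cosh (π * s) := by fun_prop
    simpa using (this.tendsto 0).mono_left nhdsWithin_le_nhds
  have hlim := ((hcosh.div hsinh pi_ne_zero).const_mul (1 / π)).sub
    (((hsinh.const_mul 2).log (by positivity)).const_mul (1 / π ^ 2))
  have hconst : 1 / π * (1 / π) - 1 / π ^ 2 * log (2 * π) = (1 - log (2 * π)) / π ^ 2 := by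
    field_simp
  rw [hconst] at hlim
  exact hlim.congr' (eventually_nhdsWithin_of_forall fun s hs => (V_add_log_eq hs).symm)
end

section
/- The improper integral of V over (0,∞) converges and equals 1/(6π), i.e. ∫₀^∞ V(t) dt = 1/(6π). -/
/-
Expanding `coth (πs)` and `log (1 - e^{-2πs})` in powers of `e^{-2πs}` gives
`π² V(s) = ∑_{n ≥ 1} (2πs + 1/n) e^{-2πns}` for `s > 0`. The terms are nonnegative and
`∫₀^∞ (2πs + 1/n) e^{-2πns} ds = 1/(πn²)`, so integrating termwise and using `ζ(2) = π²/6`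
gives `π² ∫₀^∞ V = π/6`.
-/

open Real MeasureTheory

open Set
open scoped Nat

lemma hasSum_add_one_div_mul_pow {r : ℝ} (hr : |r| < 1) (x : ℝ) :
    HasSum (fun n : ℕ => (x + 1 / (n + 1)) * r ^ (n + 1)) (x * (r / (1 - r)) - log (1 - r)) := by
  have hgeom := (hasSum_geometric_of_abs_lt_one hr).mul_left (x * r)
  have hterm : (fun n : ℕ => (x + 1 / (n + 1)) * r ^ (n + 1))
      = fun n : ℕ => x * r * r ^ n + r ^ (n + 1) / (n + 1) := by
    funext n; ring
  rw [hterm, show x * (r / (1 - r)) - log (1 - r) = x * r * (1 - r)⁻¹ + -log (1 - r) by ring]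
  exact hgeom.add (hasSum_pow_div_log_of_abs_lt_one hr)

lemma integral_pow_mul_exp_neg_mul_Ioi (k : ℕ) {b : ℝ} (hb : 0 < b) :
    ∫ t in Ioi (0 : ℝ), t ^ k * exp (-(b * t)) = k ! / b ^ (k + 1) := by
  calc ∫ t in Ioi (0 : ℝ), t ^ k * exp (-(b * t))
      = ∫ t in Ioi (0 : ℝ), t ^ ((k + 1 : ℝ) - 1) * exp (-(b * t)) := by
        simp only [add_sub_cancel_right, rpow_natCast]
    _ = (1 / b) ^ (k + 1 : ℝ) * Gamma (k + 1) :=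
        integral_rpow_mul_exp_neg_mul_Ioi (by positivity) hb
    _ = k ! / b ^ (k + 1) := by
        rw [Gamma_nat_eq_factorial, ← Nat.cast_succ, rpow_natCast, div_pow, one_pow,
          one_div_mul_eq_div]

lemma integrableOn_pow_mul_exp_neg_mul_Ioi (k : ℕ) {b : ℝ} (hb : 0 < b) :
    IntegrableOn (fun t : ℝ => t ^ k * exp (-(b * t))) (Ioi 0) := by
  refine (integrableOn_rpow_mul_exp_neg_mul_rpow (p := 1) (s := k)
    (neg_one_lt_zero.trans_le k.cast_nonneg) one_pos hb).congr_fun (fun t _ => ?_) measurableSet_Ioi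
  simp [rpow_natCast]

lemma pi_sq_mul_V {s : ℝ} (hs : 0 < s) :
    π ^ 2 * V s = 2 * π * s * (exp (-(2 * π * s)) / (1 - exp (-(2 * π * s))))
      - log (1 - exp (-(2 * π * s))) := by
  set r := exp (-(2 * π * s)) with hr
  have hr1 : r < 1 := exp_lt_one_iff.2 (by nlinarith [pi_pos])
  have hsinh : 2 * sinh (π * s) = exp (π * s) * (1 - r) := by
    rw [sinh_eq, hr, mul_sub, ← exp_add]; ring_nf
  have hcosh : 2 * cosh (π * s) = exp (π * s) * (1 + r) := by
    rw [cosh_eq, hr, mul_add, ← exp_add]; ring_nf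
  have hcoth : cosh (π * s) / sinh (π * s) = (1 + r) / (1 - r) := by
    rw [← mul_div_mul_left _ _ (two_ne_zero (α := ℝ)), hsinh, hcosh,
      mul_div_mul_left _ _ (exp_pos _).ne']
  rw [V, hcoth, hsinh, log_mul (exp_pos _).ne' (by linarith), log_exp]
  have : 1 - r ≠ 0 := by linarith
  field_simp
  ring

noncomputable def wallEnergyTerm (n : ℕ) (s : ℝ) : ℝ :=
  (2 * π * s + 1 / (n + 1)) * exp (-(2 * π * (n + 1) * s))

lemma hasSum_wallEnergyTerm {s : ℝ} (hs : 0 < s) :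
    HasSum (fun n => wallEnergyTerm n s) (π ^ 2 * V s) := by
  have hr : |exp (-(2 * π * s))| < 1 := by
    rw [abs_of_pos (exp_pos _), exp_lt_one_iff]; nlinarith [pi_pos]
  have hterm (n : ℕ) :
      wallEnergyTerm n s = (2 * π * s + 1 / (n + 1)) * exp (-(2 * π * s)) ^ (n + 1) := by
    rw [wallEnergyTerm, ← exp_nat_mul]; push_cast; ring_nf
  simpa only [hterm, pi_sq_mul_V hs] using hasSum_add_one_div_mul_pow hr (2 * π * s)

lemma wallEnergyTerm_nonneg (n : ℕ) {s : ℝ} (hs : 0 ≤ s) : 0 ≤ wallEnergyTerm n s := by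
  unfold wallEnergyTerm; positivity

lemma wallEnergyTerm_eq (n : ℕ) : wallEnergyTerm n = fun s =>
    2 * π * (s ^ 1 * exp (-(2 * π * (n + 1) * s)))
      + 1 / (n + 1) * (s ^ 0 * exp (-(2 * π * (n + 1) * s))) := by
  funext s; rw [wallEnergyTerm]; ring

lemma integrableOn_wallEnergyTerm (n : ℕ) : IntegrableOn (wallEnergyTerm n) (Ioi 0) := by
  have hb : 0 < 2 * π * (n + 1) := by positivity
  rw [wallEnergyTerm_eq]
  exact ((integrableOn_pow_mul_exp_neg_mul_Ioi 1 hb).const_mul _).add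
    ((integrableOn_pow_mul_exp_neg_mul_Ioi 0 hb).const_mul _)

lemma integral_wallEnergyTerm (n : ℕ) :
    ∫ s in Ioi (0 : ℝ), wallEnergyTerm n s = 1 / (π * (n + 1) ^ 2) := by
  have hb : 0 < 2 * π * (n + 1) := by positivity
  rw [wallEnergyTerm_eq, integral_add ((integrableOn_pow_mul_exp_neg_mul_Ioi 1 hb).const_mul _)
      ((integrableOn_pow_mul_exp_neg_mul_Ioi 0 hb).const_mul _), integral_const_mul,
    integral_const_mul, integral_pow_mul_exp_neg_mul_Ioi 1 hb,
    integral_pow_mul_exp_neg_mul_Ioi 0 hb]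
  field_simp
  ring

lemma hasSum_one_div_pi_mul_add_one_sq :
    HasSum (fun n : ℕ => 1 / (π * (n + 1) ^ 2)) (π / 6) := by
  have h := (hasSum_nat_add_iff' 1).2 hasSum_zeta_two
  simp only [Finset.range_one, Finset.sum_singleton, Nat.cast_zero, Nat.cast_add, Nat.cast_one,
    ne_eq, OfNat.ofNat_ne_zero, not_false_eq_true, zero_pow, div_zero, sub_zero] at h
  have hterm :
      (fun n : ℕ => 1 / (π * (n + 1) ^ 2)) = fun n : ℕ => 1 / ((n : ℝ) + 1) ^ 2 / π := by
    funext n; field_simp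
  rw [hterm, show π / 6 = π ^ 2 / 6 / π by field_simp]
  exact h.div_const π

lemma hasSum_integral_wallEnergyTerm :
    HasSum (fun n => ∫ s in Ioi (0 : ℝ), wallEnergyTerm n s)
      (π ^ 2 * ∫ s in Ioi (0 : ℝ), V s) := by
  have hnorm (n : ℕ) :
      ∫ s in Ioi (0 : ℝ), ‖wallEnergyTerm n s‖ = ∫ s in Ioi (0 : ℝ), wallEnergyTerm n s :=
    setIntegral_congr_fun measurableSet_Ioi fun s hs =>
      norm_of_nonneg (wallEnergyTerm_nonneg n hs.le)
  have h := hasSum_integral_of_summable_integral_norm integrableOn_wallEnergyTerm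
    (by simpa only [hnorm, integral_wallEnergyTerm]
      using hasSum_one_div_pi_mul_add_one_sq.summable)
  rwa [setIntegral_congr_fun measurableSet_Ioi fun s hs => (hasSum_wallEnergyTerm hs).tsum_eq,
    integral_const_mul] at h

/-- The improper integral of `V` over `(0,∞)` converges and equals `1/(6π)`. -/
theorem stmt5 :
    IntegrableOn V (Set.Ioi 0) ∧
    (∫ t in Set.Ioi (0 : ℝ), V t) = 1 / (6 * Real.pi) := by
  have h := hasSum_integral_wallEnergyTerm
  simp only [integral_wallEnergyTerm] at h
  have hV : ∫ t in Ioi (0 : ℝ), V t = 1 / (6 * π) := by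
    have := h.unique hasSum_one_div_pi_mul_add_one_sq
    field_simp at this ⊢
    linarith
  -- A non-integrable function would have Bochner integral `0`.
  exact ⟨Integrable.of_integral_ne_zero (by rw [hV]; positivity), hV⟩
end

section
/- The improper integral ∫₀^∞ s·φ(s) ds = ∫₀^∞ s²/sinh²(πs) ds converges and equals 1/(6π); in particular ∫₀^∞ s·φ(s) ds = ∫₀^∞ V(s) ds. -/
/-!
For `s > 0` put `q = exp (-2πs)`. Then `s φ(s) = 4 s² q / (1 - q)² = ∑ₙ 4 n s² qⁿ` and
`V(s) = (2s/π) q / (1 - q) - log (1 - q) / π² = ∑ₙ (2s/π + 1/(π² n)) qⁿ`, series of nonnegative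
terms. Each term, of the shape `sᵏ exp (-2πns)`, integrates over `(0, ∞)` to `1/(π³ n²)` in both
series, so by monotone convergence both integrals equal `ζ(2)/π³ = 1/(6π)`.
-/

open Real MeasureTheory

/-- The wall-interaction force `φ(s) = s / sinh²(πs)`. -/
noncomputable def phi (s : ℝ) : ℝ := s / (Real.sinh (Real.pi * s)) ^ 2

open Filter Set
open scoped Nat

theorem integrable_and_integral_eq_of_hasSum_of_nonneg {α : Type*} [MeasurableSpace α]
    {μ : Measure α} {f : ℕ → α → ℝ} {g : α → ℝ} {a : ℝ}
    (hf : ∀ n, Integrable (f n) μ) (hf_nonneg : ∀ n, 0 ≤ᵐ[μ] f n)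
    (hfg : ∀ᵐ x ∂μ, HasSum (fun n ↦ f n x) (g x)) (ha : HasSum (fun n ↦ ∫ x, f n x ∂μ) a) :
    Integrable g μ ∧ ∫ x, g x ∂μ = a := by
  refine ⟨?_, ?_⟩
  · have hg_meas : AEStronglyMeasurable g μ :=
      aestronglyMeasurable_of_tendsto_ae atTop
        (fun n ↦ Finset.aestronglyMeasurable_fun_sum (Finset.range n) fun i _ ↦ (hf i).1)
        (by filter_upwards [hfg] with x hx using hx.tendsto_sum_nat)
    have hg_nonneg : 0 ≤ᵐ[μ] g := by
      filter_upwards [hfg, ae_all_iff.2 hf_nonneg] with x hx h0 using hx.nonneg h0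
    refine (lintegral_ofReal_ne_top_iff_integrable hg_meas hg_nonneg).1 ?_
    have h_lintegral : ∫⁻ x, ENNReal.ofReal (g x) ∂μ = ENNReal.ofReal a := by
      calc ∫⁻ x, ENNReal.ofReal (g x) ∂μ = ∫⁻ x, ∑' n, ENNReal.ofReal (f n x) ∂μ := by
            refine lintegral_congr_ae ?_
            filter_upwards [hfg, ae_all_iff.2 hf_nonneg] with x hx h0
            rw [← hx.tsum_eq, ENNReal.ofReal_tsum_of_nonneg h0 hx.summable]
        _ = ∑' n, ENNReal.ofReal (∫ x, f n x ∂μ) := by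
            rw [lintegral_tsum fun n ↦ (hf n).aemeasurable.ennreal_ofReal]
            congr 1 with n
            rw [ofReal_integral_eq_lintegral_ofReal (hf n) (hf_nonneg n)]
        _ = ENNReal.ofReal a := by
            rw [← ENNReal.ofReal_tsum_of_nonneg (fun n ↦ integral_nonneg_of_ae (hf_nonneg n))
              ha.summable, ha.tsum_eq]
    rw [h_lintegral]
    exact ENNReal.ofReal_ne_top
  · have h_norm : (fun n ↦ ∫ x, ‖f n x‖ ∂μ) = fun n ↦ ∫ x, f n x ∂μ := by
      ext n
      refine integral_congr_ae ?_
      filter_upwards [hf_nonneg n] with x hx using Real.norm_of_nonneg hx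
    have h_tsum : ∫ x, ∑' n, f n x ∂μ = ∫ x, g x ∂μ :=
      integral_congr_ae (by filter_upwards [hfg] with x hx using hx.tsum_eq)
    rw [← h_tsum]
    exact (ha.unique (hasSum_integral_of_summable_integral_norm hf (h_norm ▸ ha.summable))).symm

theorem two_mul_sinh_eq_exp_mul (x : ℝ) : 2 * sinh x = exp x * (1 - exp (-(2 * x))) := by
  rw [sinh_eq, mul_sub, mul_one, ← exp_add]
  ring_nf

theorem two_mul_cosh_eq_exp_mul (x : ℝ) : 2 * cosh x = exp x * (1 + exp (-(2 * x))) := by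
  rw [cosh_eq, mul_add, mul_one, ← exp_add]
  ring_nf

theorem sinh_sq_eq_exp_neg_two_mul (x : ℝ) :
    sinh x ^ 2 = (1 - exp (-(2 * x))) ^ 2 / (4 * exp (-(2 * x))) := by
  have h : exp (-(2 * x)) * exp x ^ 2 = 1 := by
    rw [← exp_nat_mul, ← exp_add]; norm_num
  have h2 : sinh x = exp x * (1 - exp (-(2 * x))) / 2 := by
    rw [← two_mul_sinh_eq_exp_mul]; ring
  rw [h2]
  field_simp
  linear_combination 4 * (1 - exp (-(2 * x))) ^ 2 * h

theorem cosh_div_sinh_eq_exp_neg_two_mul (x : ℝ) :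
    cosh x / sinh x = (1 + exp (-(2 * x))) / (1 - exp (-(2 * x))) := by
  rw [← mul_div_mul_left _ _ (two_ne_zero' ℝ), two_mul_sinh_eq_exp_mul, two_mul_cosh_eq_exp_mul,
    mul_div_mul_left _ _ (exp_ne_zero x)]

theorem exp_neg_two_mul_lt_one {x : ℝ} (hx : 0 < x) : exp (-(2 * x)) < 1 :=
  exp_lt_one_iff.2 (by linarith)

theorem log_two_mul_sinh_eq {x : ℝ} (hx : 0 < x) :
    log (2 * sinh x) = x + log (1 - exp (-(2 * x))) := by
  rw [two_mul_sinh_eq_exp_mul, log_mul (exp_ne_zero x)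
    (sub_pos.2 (exp_neg_two_mul_lt_one hx)).ne', log_exp]

theorem hasSum_pow_succ {q : ℝ} (hq : |q| < 1) :
    HasSum (fun n : ℕ ↦ q ^ (n + 1)) (q / (1 - q)) := by
  have h := (hasSum_geometric_of_abs_lt_one hq).mul_left q
  rw [← div_eq_mul_inv] at h
  exact h.congr_fun fun n ↦ pow_succ' q n

theorem hasSum_succ_mul_pow_succ {q : ℝ} (hq : |q| < 1) :
    HasSum (fun n : ℕ ↦ ((n : ℝ) + 1) * q ^ (n + 1)) (q / (1 - q) ^ 2) := by
  have h := (hasSum_nat_add_iff' 1).2 (hasSum_coe_mul_geometric_of_norm_lt_one (r := q) hq)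
  simpa using h

theorem hasSum_one_div_pi_pow_three_mul_succ_sq :
    HasSum (fun n : ℕ ↦ 1 / (π ^ 3 * ((n : ℝ) + 1) ^ 2)) (1 / (6 * π)) := by
  have h := ((hasSum_nat_add_iff' 1).2 hasSum_zeta_two).mul_left (1 / π ^ 3)
  have h_val : 1 / π ^ 3 * (π ^ 2 / 6 - ∑ i ∈ Finset.range 1, 1 / (i : ℝ) ^ 2) = 1 / (6 * π) := by
    norm_num
    field_simp
  rw [h_val] at h
  exact h.congr_fun fun n ↦ by rw [one_div_mul_one_div, Nat.cast_add_one]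

theorem integrableOn_pow_mul_exp_neg_mul (k : ℕ) {b : ℝ} (hb : 0 < b) :
    IntegrableOn (fun s : ℝ ↦ s ^ k * exp (-(b * s))) (Ioi 0) := by
  have h := integrableOn_rpow_mul_exp_neg_mul_rpow (s := k) (p := 1)
    (by linarith [(Nat.cast_nonneg k : (0 : ℝ) ≤ k)]) one_pos hb
  simpa only [rpow_one, rpow_natCast, neg_mul] using h

theorem integral_pow_mul_exp_neg_mul (k : ℕ) {b : ℝ} (hb : 0 < b) :
    ∫ s in Ioi (0 : ℝ), s ^ k * exp (-(b * s)) = k ! / b ^ (k + 1) := by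
  have h := integral_rpow_mul_exp_neg_mul_Ioi (a := k + 1) (by positivity) hb
  simp only [add_sub_cancel_right, rpow_natCast] at h
  rw [h, ← Nat.cast_add_one, rpow_natCast, Nat.cast_add_one, Gamma_nat_eq_factorial, one_div_pow,
    one_div_mul_eq_div]

noncomputable def phiTerm (n : ℕ) (s : ℝ) : ℝ :=
  4 * (n + 1) * (s ^ 2 * exp (-(2 * π * (n + 1) * s)))

noncomputable def VTerm (n : ℕ) (s : ℝ) : ℝ :=
  2 / π * (s * exp (-(2 * π * (n + 1) * s)))
    + 1 / (π ^ 2 * (n + 1)) * exp (-(2 * π * (n + 1) * s))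

theorem exp_neg_two_pi_succ_mul (n : ℕ) (s : ℝ) :
    exp (-(2 * π * (n + 1) * s)) = exp (-(2 * (π * s))) ^ (n + 1) := by
  rw [← exp_nat_mul]
  push_cast
  ring_nf

theorem abs_exp_neg_two_pi_mul_lt_one {s : ℝ} (hs : 0 < s) : |exp (-(2 * (π * s)))| < 1 := by
  rw [abs_of_pos (exp_pos _)]
  exact exp_neg_two_mul_lt_one (by positivity)

theorem hasSum_phiTerm {s : ℝ} (hs : 0 < s) : HasSum (phiTerm · s) (s * phi s) := by
  set q := exp (-(2 * (π * s))) with hq_def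
  have hq : |q| < 1 := abs_exp_neg_two_pi_mul_lt_one hs
  have h_val : s * phi s = 4 * s ^ 2 * (q / (1 - q) ^ 2) := by
    have : 1 - q ≠ 0 := (sub_pos.2 (abs_lt.1 hq).2).ne'
    rw [phi, sinh_sq_eq_exp_neg_two_mul, ← hq_def]
    field_simp
  rw [h_val]
  refine ((hasSum_succ_mul_pow_succ hq).mul_left (4 * s ^ 2)).congr_fun fun n ↦ ?_
  rw [phiTerm, exp_neg_two_pi_succ_mul, ← hq_def]
  ring

theorem hasSum_VTerm {s : ℝ} (hs : 0 < s) : HasSum (VTerm · s) (V s) := by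
  set q := exp (-(2 * (π * s))) with hq_def
  have hq : |q| < 1 := abs_exp_neg_two_pi_mul_lt_one hs
  have h_val : V s = 2 * s / π * (q / (1 - q)) + 1 / π ^ 2 * -log (1 - q) := by
    have : 1 - q ≠ 0 := (sub_pos.2 (abs_lt.1 hq).2).ne'
    rw [V, cosh_div_sinh_eq_exp_neg_two_mul, log_two_mul_sinh_eq (by positivity), ← hq_def]
    field_simp
    ring
  rw [h_val]
  refine (((hasSum_pow_succ hq).mul_left (2 * s / π)).add
    ((hasSum_pow_div_log_of_abs_lt_one hq).mul_left (1 / π ^ 2))).congr_fun fun n ↦ ?_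
  rw [VTerm, exp_neg_two_pi_succ_mul, ← hq_def]
  field_simp

theorem phiTerm_nonneg (n : ℕ) (s : ℝ) : 0 ≤ phiTerm n s := by
  unfold phiTerm
  positivity

theorem VTerm_nonneg (n : ℕ) {s : ℝ} (hs : 0 ≤ s) : 0 ≤ VTerm n s := by
  unfold VTerm
  positivity

theorem two_pi_mul_succ_pos (n : ℕ) : 0 < 2 * π * ((n : ℝ) + 1) := by positivity

theorem integrableOn_phiTerm (n : ℕ) : IntegrableOn (phiTerm n) (Ioi 0) :=
  (integrableOn_pow_mul_exp_neg_mul 2 (two_pi_mul_succ_pos n)).const_mul _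

theorem integral_phiTerm (n : ℕ) :
    ∫ s in Ioi 0, phiTerm n s = 1 / (π ^ 3 * ((n : ℝ) + 1) ^ 2) := by
  simp only [phiTerm, integral_const_mul,
    integral_pow_mul_exp_neg_mul 2 (two_pi_mul_succ_pos n)]
  norm_num [Nat.factorial]
  field_simp
  ring

theorem VTerm_eq (n : ℕ) :
    VTerm n = fun s ↦ 2 / π * (s ^ 1 * exp (-(2 * π * (n + 1) * s)))
      + 1 / (π ^ 2 * (n + 1)) * (s ^ 0 * exp (-(2 * π * (n + 1) * s))) := by
  ext s
  rw [VTerm, pow_one, pow_zero, one_mul]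

theorem integrableOn_VTerm (n : ℕ) : IntegrableOn (VTerm n) (Ioi 0) := by
  rw [VTerm_eq]
  exact ((integrableOn_pow_mul_exp_neg_mul 1 (two_pi_mul_succ_pos n)).const_mul _).add
    ((integrableOn_pow_mul_exp_neg_mul 0 (two_pi_mul_succ_pos n)).const_mul _)

theorem integral_VTerm (n : ℕ) :
    ∫ s in Ioi 0, VTerm n s = 1 / (π ^ 3 * ((n : ℝ) + 1) ^ 2) := by
  rw [VTerm_eq, integral_add
    ((integrableOn_pow_mul_exp_neg_mul 1 (two_pi_mul_succ_pos n)).const_mul _)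
    ((integrableOn_pow_mul_exp_neg_mul 0 (two_pi_mul_succ_pos n)).const_mul _),
    integral_const_mul, integral_const_mul,
    integral_pow_mul_exp_neg_mul 1 (two_pi_mul_succ_pos n),
    integral_pow_mul_exp_neg_mul 0 (two_pi_mul_succ_pos n)]
  norm_num
  field_simp
  ring

/-- The improper integral `∫₀^∞ s·φ(s) ds = ∫₀^∞ s²/sinh²(πs) ds` converges and equals
`1/(6π)`; in particular it equals `∫₀^∞ V(s) ds`. -/
theorem stmt6 :
    IntegrableOn (fun s : ℝ => s * phi s) (Set.Ioi 0) ∧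
    (∫ s in Set.Ioi (0 : ℝ), s * phi s) = 1 / (6 * Real.pi) ∧
    (∫ s in Set.Ioi (0 : ℝ), s * phi s) = ∫ s in Set.Ioi (0 : ℝ), V s := by
  obtain ⟨h_int, h_phi⟩ := integrable_and_integral_eq_of_hasSum_of_nonneg integrableOn_phiTerm
    (fun n ↦ ae_of_all _ (phiTerm_nonneg n))
    (ae_restrict_of_forall_mem measurableSet_Ioi fun s hs ↦ hasSum_phiTerm hs)
    (by simpa only [integral_phiTerm] using hasSum_one_div_pi_pow_three_mul_succ_sq)
  obtain ⟨-, h_V⟩ := integrable_and_integral_eq_of_hasSum_of_nonneg integrableOn_VTerm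
    (fun n ↦ ae_restrict_of_forall_mem measurableSet_Ioi fun s hs ↦ VTerm_nonneg n hs.le)
    (ae_restrict_of_forall_mem measurableSet_Ioi fun s hs ↦ hasSum_VTerm hs)
    (by simpa only [integral_VTerm] using hasSum_one_div_pi_pow_three_mul_succ_sq)
  exact ⟨h_int, h_phi, h_phi.trans h_V.symm⟩
end

section
/- (Head–Louat equilibrium identity, subcritical regime.) Let ℓ > 0 and let ρ(y) = √((ℓ−y)/y) for y ∈ (0,ℓ). Then for every x ∈ (0,ℓ) the Cauchy principal value of ∫₀^ℓ ρ(y)/(x−y) dy exists and equals π; i.e. the limit as ε → 0⁺ of ∫_{(0,ℓ)∖(x−ε,x+ε)} √((ℓ−y)/y)/(x−y) dy equals π. In particular ρ solves the singular integral equilibrium equation of the subcritical regime with constant right-hand side. -/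
/-!
On either side of `x` the integrand has the explicit primitive
`F y = arcsin (2y/ℓ - 1) + 2c log (√(x(ℓ-y)) + √((ℓ-x)y)) - c log |x - y|`, `c = √((ℓ-x)/x)`;
differentiating it comes down to `√(x(ℓ-y))² - √((ℓ-x)y)² = ℓ(x-y)`. Its singularity at
`y = x` is the even term `c log |x - y|`, which cancels in `F (x - ε) - F (x + ε)`; so the
principal value is `F ℓ - F 0 = π/2 - (-π/2) = π`.
-/

open Real Filter MeasureTheory Set Topology

section PrincipalValue

variable {f F : ℝ → ℝ} {a b x : ℝ}

theorem integrableOn_and_setIntegral_Ioc_eq_sub_of_nonneg (hab : a ≤ b)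
    (hcont : ContinuousOn F (Icc a b)) (hderiv : ∀ y ∈ Ioo a b, HasDerivAt F (f y) y)
    (hf : ∀ y ∈ Ioo a b, 0 ≤ f y) :
    IntegrableOn f (Ioc a b) ∧ ∫ y in Ioc a b, f y = F b - F a := by
  have hint := intervalIntegral.integrableOn_deriv_of_nonneg hcont hderiv hf
  refine ⟨hint, ?_⟩
  rw [← intervalIntegral.integral_of_le hab]
  exact intervalIntegral.integral_eq_sub_of_hasDerivAt_of_le hab hcont hderiv
    ((intervalIntegrable_iff_integrableOn_Ioc_of_le hab).2 hint)

theorem integrableOn_and_setIntegral_Ico_eq_sub_of_nonpos (hab : a ≤ b)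
    (hcont : ContinuousOn F (Icc a b)) (hderiv : ∀ y ∈ Ioo a b, HasDerivAt F (f y) y)
    (hf : ∀ y ∈ Ioo a b, f y ≤ 0) :
    IntegrableOn f (Ico a b) ∧ ∫ y in Ico a b, f y = F b - F a := by
  obtain ⟨hint, heq⟩ := integrableOn_and_setIntegral_Ioc_eq_sub_of_nonneg (F := -F)
    (f := fun y => -f y) hab hcont.neg (fun y hy => (hderiv y hy).neg)
    (fun y hy => neg_nonneg.2 (hf y hy))
  rw [integral_neg, Pi.neg_apply, Pi.neg_apply] at heq
  refine ⟨?_, ?_⟩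
  · simpa using (integrableOn_Ico_iff_integrableOn_Ioo (by simp)).2
      (hint.neg.mono_set Ioo_subset_Ioc_self)
  · rw [setIntegral_congr_set Ico_ae_eq_Ioc]
    linarith

theorem Ioo_diff_Ioo_eq_Ioc_union_Ico {ε : ℝ} (hε : 0 < ε) (ha : a ≤ x - ε) (hb : x + ε ≤ b) :
    Ioo a b \ Ioo (x - ε) (x + ε) = Ioc a (x - ε) ∪ Ico (x + ε) b := by
  ext y
  simp only [Set.mem_sdiff, mem_Ioo, mem_union, mem_Ioc, mem_Ico]
  constructor
  · rintro ⟨⟨hay, hyb⟩, hy⟩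
    by_cases h : y ≤ x - ε
    · exact Or.inl ⟨hay, h⟩
    · exact Or.inr ⟨not_lt.1 fun h' => hy ⟨not_le.1 h, h'⟩, hyb⟩
  · rintro (⟨hay, hy⟩ | ⟨hy, hyb⟩)
    · exact ⟨⟨hay, by linarith⟩, fun h => by linarith [h.1]⟩
    · exact ⟨⟨by linarith, hyb⟩, fun h => by linarith [h.2]⟩

theorem setIntegral_Ioo_diff_Ioo_eq_sub {ε : ℝ} (hε : 0 < ε) (ha : a ≤ x - ε) (hb : x + ε ≤ b)
    (hcont : ContinuousOn F (Icc a b \ {x}))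
    (hderiv : ∀ y ∈ Ioo a b, y ≠ x → HasDerivAt F (f y) y)
    (hleft : ∀ y ∈ Ioo a x, 0 ≤ f y) (hright : ∀ y ∈ Ioo x b, f y ≤ 0) :
    ∫ y in Ioo a b \ Ioo (x - ε) (x + ε), f y = F b - F a + (F (x - ε) - F (x + ε)) := by
  obtain ⟨hintl, heql⟩ := integrableOn_and_setIntegral_Ioc_eq_sub_of_nonneg ha
    (hcont.mono fun y hy => ⟨⟨hy.1, by linarith [hy.2]⟩, (by linarith [hy.2] : y < x).ne⟩)
    (fun y hy => hderiv y ⟨hy.1, by linarith [hy.2]⟩ (by linarith [hy.2] : y < x).ne)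
    (fun y hy => hleft y ⟨by linarith [hy.1], by linarith [hy.2]⟩)
  obtain ⟨hintr, heqr⟩ := integrableOn_and_setIntegral_Ico_eq_sub_of_nonpos hb
    (hcont.mono fun y hy => ⟨⟨by linarith [hy.1], hy.2⟩, (by linarith [hy.1] : x < y).ne'⟩)
    (fun y hy => hderiv y ⟨by linarith [hy.1], hy.2⟩ (by linarith [hy.1] : x < y).ne')
    (fun y hy => hright y ⟨by linarith [hy.1], by linarith [hy.2]⟩)
  have hdisj : Disjoint (Ioc a (x - ε)) (Ico (x + ε) b) :=
    Set.disjoint_left.2 fun y hl hr => by linarith [hl.2, hr.1]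
  rw [Ioo_diff_Ioo_eq_Ioc_union_Ico hε ha hb, setIntegral_union hdisj measurableSet_Ico hintl hintr,
    heql, heqr]
  ring

/-- A derivative of constant sign is integrable, so the sign conditions make `f` integrable
away from `x`. -/
theorem tendsto_setIntegral_Ioo_diff_Ioo (hax : a < x) (hxb : x < b)
    (hcont : ContinuousOn F (Icc a b \ {x}))
    (hderiv : ∀ y ∈ Ioo a b, y ≠ x → HasDerivAt F (f y) y)
    (hleft : ∀ y ∈ Ioo a x, 0 ≤ f y) (hright : ∀ y ∈ Ioo x b, f y ≤ 0)
    (hjump : Tendsto (fun ε => F (x - ε) - F (x + ε)) (𝓝[>] 0) (𝓝 0)) :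
    Tendsto (fun ε => ∫ y in Ioo a b \ Ioo (x - ε) (x + ε), f y) (𝓝[>] 0) (𝓝 (F b - F a)) := by
  have hsmall : ∀ᶠ ε in 𝓝[>] (0 : ℝ), 0 < ε ∧ a ≤ x - ε ∧ x + ε ≤ b := by
    filter_upwards [Ioo_mem_nhdsGT (lt_min (sub_pos.2 hax) (sub_pos.2 hxb))] with ε hε
    rw [mem_Ioo, lt_min_iff] at hε
    exact ⟨hε.1, by linarith, by linarith⟩
  simpa using (hjump.const_add (F b - F a)).congr' <| hsmall.mono fun ε ⟨hε, ha, hb⟩ =>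
    (setIntegral_Ioo_diff_Ioo_eq_sub hε ha hb hcont hderiv hleft hright).symm

end PrincipalValue

theorem hasDerivAt_arcsin_two_mul_div_sub_one {ℓ y : ℝ} (hy : y ∈ Ioo 0 ℓ) :
    HasDerivAt (fun t => arcsin (2 * t / ℓ - 1)) (1 / √(y * (ℓ - y))) y := by
  obtain ⟨hy0, hyℓ⟩ := hy
  have hℓ : 0 < ℓ := hy0.trans hyℓ
  have hlin : HasDerivAt (fun t => 2 * t / ℓ - 1) (2 / ℓ) y := by
    simpa using (((hasDerivAt_id y).const_mul 2).div_const ℓ).sub_const 1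
  refine ((hasDerivAt_arcsin (ne_of_gt ?_) (ne_of_lt ?_)).comp y hlin).congr_deriv ?_
  · have : 0 < 2 * y / ℓ := by positivity
    linarith
  · have : 2 * y / ℓ < 2 := by rw [div_lt_iff₀ hℓ]; linarith
    linarith
  · have : 1 - (2 * y / ℓ - 1) ^ 2 = (2 / ℓ) ^ 2 * (y * (ℓ - y)) := by field_simp; ring
    rw [this, sqrt_mul (by positivity), sqrt_sq (by positivity)]
    field_simp

noncomputable def headLouatRegular (ℓ x y : ℝ) : ℝ :=
  arcsin (2 * y / ℓ - 1) + 2 * √((ℓ - x) / x) * log (√(x * (ℓ - y)) + √((ℓ - x) * y))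

/-- `Real.log (x - y)` is `log |x - y|`, so this is a primitive on both sides of `x`. -/
noncomputable def headLouatPrimitive (ℓ x y : ℝ) : ℝ :=
  headLouatRegular ℓ x y - √((ℓ - x) / x) * log (x - y)

theorem hasDerivAt_headLouatRegular {ℓ x y : ℝ} (hx : x ∈ Ioo 0 ℓ) (hy : y ∈ Ioo 0 ℓ) :
    HasDerivAt (headLouatRegular ℓ x)
      (1 / √(y * (ℓ - y)) + √((ℓ - x) / x) * ((ℓ - x) / √((ℓ - x) * y) - x / √(x * (ℓ - y))) /
        (√(x * (ℓ - y)) + √((ℓ - x) * y))) y := by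
  obtain ⟨hx0, hxℓ⟩ := hx
  obtain ⟨hy0, hyℓ⟩ := hy
  have ha : 0 < x * (ℓ - y) := mul_pos hx0 (sub_pos.2 hyℓ)
  have hb : 0 < (ℓ - x) * y := mul_pos (sub_pos.2 hxℓ) hy0
  have hA : HasDerivAt (fun t => √(x * (ℓ - t))) (-x / (2 * √(x * (ℓ - y)))) y := by
    convert (((hasDerivAt_id' y).const_sub ℓ).const_mul x).sqrt ha.ne' using 1
    ring
  have hB : HasDerivAt (fun t => √((ℓ - x) * t)) ((ℓ - x) / (2 * √((ℓ - x) * y))) y := by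
    convert ((hasDerivAt_id' y).const_mul (ℓ - x)).sqrt hb.ne' using 1
    ring
  have hAB : √(x * (ℓ - y)) + √((ℓ - x) * y) ≠ 0 := (add_pos (sqrt_pos.2 ha) (sqrt_pos.2 hb)).ne'
  refine ((hasDerivAt_arcsin_two_mul_div_sub_one ⟨hy0, hyℓ⟩).add
    (((hA.add hB).log hAB).const_mul (2 * √((ℓ - x) / x)))).congr_deriv ?_
  simp only [Pi.add_apply]
  have ha' : √(x * (ℓ - y)) ≠ 0 := (sqrt_pos.2 ha).ne'
  have hb' : √((ℓ - x) * y) ≠ 0 := (sqrt_pos.2 hb).ne'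
  field_simp
  ring

theorem hasDerivAt_headLouatPrimitive {ℓ x y : ℝ} (hx : x ∈ Ioo 0 ℓ) (hy : y ∈ Ioo 0 ℓ)
    (hyx : y ≠ x) : HasDerivAt (headLouatPrimitive ℓ x) (√((ℓ - y) / y) / (x - y)) y := by
  obtain ⟨hx0, hxℓ⟩ := hx
  obtain ⟨hy0, hyℓ⟩ := hy
  have hxy : x - y ≠ 0 := sub_ne_zero.2 hyx.symm
  refine ((hasDerivAt_headLouatRegular ⟨hx0, hxℓ⟩ ⟨hy0, hyℓ⟩).sub
    ((((hasDerivAt_id' y).const_sub x).log hxy).const_mul √((ℓ - x) / x))).congr_deriv ?_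
  set a := √(x * (ℓ - y))
  set b := √((ℓ - x) * y)
  set s := √(y * (ℓ - y)) with hs_def
  set c := √((ℓ - x) / x)
  have ha : 0 < a := sqrt_pos.2 (mul_pos hx0 (sub_pos.2 hyℓ))
  have hb : 0 < b := sqrt_pos.2 (mul_pos (sub_pos.2 hxℓ) hy0)
  have hs : 0 < s := sqrt_pos.2 (mul_pos hy0 (sub_pos.2 hyℓ))
  have ha2 : a ^ 2 = x * (ℓ - y) := sq_sqrt (mul_pos hx0 (sub_pos.2 hyℓ)).le
  have hb2 : b ^ 2 = (ℓ - x) * y := sq_sqrt (mul_pos (sub_pos.2 hxℓ) hy0).le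
  have hs2 : s ^ 2 = y * (ℓ - y) := sq_sqrt (mul_pos hy0 (sub_pos.2 hyℓ)).le
  have hc2 : c ^ 2 = (ℓ - x) / x := sq_sqrt (div_pos (sub_pos.2 hxℓ) hx0).le
  have hρ : √((ℓ - y) / y) = (ℓ - y) / s := by
    rw [eq_div_iff hs.ne', hs_def, ← sqrt_mul (div_pos (sub_pos.2 hyℓ) hy0).le,
      show (ℓ - y) / y * (y * (ℓ - y)) = (ℓ - y) ^ 2 by field_simp, sqrt_sq (sub_pos.2 hyℓ).le]
  have hc : c = a * b / (x * s) := by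
    rw [← sq_eq_sq₀ (sqrt_nonneg _) (by positivity), div_pow, mul_pow, mul_pow, ha2, hb2, hs2, hc2]
    field_simp
  have key : ((ℓ - x) * a - x * b) * (x - y) + a * b * (a + b) = x * (ℓ - x) * (a + b) := by
    refine mul_left_cancel₀ (hx0.trans hxℓ).ne' ?_
    linear_combination (-((ℓ - x) * a - x * b) + (a + b) * (ℓ - x)) * ha2 +
      (((ℓ - x) * a - x * b) + (a + b) * x) * hb2
  rw [hρ, hc]
  field_simp
  linear_combination key

theorem continuousOn_headLouatRegular {ℓ x : ℝ} (hx : x ∈ Ioo 0 ℓ) :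
    ContinuousOn (headLouatRegular ℓ x) (Icc 0 ℓ) := by
  obtain ⟨hx0, hxℓ⟩ := hx
  refine (by fun_prop : Continuous fun y => arcsin (2 * y / ℓ - 1)).continuousOn.add
    (continuousOn_const.mul (ContinuousOn.log (by fun_prop) fun y hy => ?_))
  rcases hy.2.lt_or_eq with hyℓ | rfl
  · exact (add_pos_of_pos_of_nonneg (sqrt_pos.2 (mul_pos hx0 (sub_pos.2 hyℓ)))
      (sqrt_nonneg _)).ne'
  · exact (add_pos_of_nonneg_of_pos (sqrt_nonneg _)
      (sqrt_pos.2 (mul_pos (sub_pos.2 hxℓ) (hx0.trans hxℓ)))).ne'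

theorem continuousOn_headLouatPrimitive {ℓ x : ℝ} (hx : x ∈ Ioo 0 ℓ) :
    ContinuousOn (headLouatPrimitive ℓ x) (Icc 0 ℓ \ {x}) :=
  ((continuousOn_headLouatRegular hx).mono sdiff_subset).sub (continuousOn_const.mul
    (ContinuousOn.log (by fun_prop) fun _ hy => sub_ne_zero.2 (Ne.symm hy.2)))

theorem headLouatPrimitive_sub_eq_pi {ℓ x : ℝ} (hx : x ∈ Ioo 0 ℓ) :
    headLouatPrimitive ℓ x ℓ - headLouatPrimitive ℓ x 0 = π := by
  obtain ⟨hx0, hxℓ⟩ := hx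
  have hℓ : 0 < ℓ := hx0.trans hxℓ
  have hlx : 0 < ℓ - x := sub_pos.2 hxℓ
  simp only [headLouatPrimitive, headLouatRegular, mul_zero, zero_div, zero_sub, sub_self,
    sub_zero, zero_add, add_zero, arcsin_neg_one, sqrt_zero,
    log_sqrt (mul_pos hx0 hℓ).le, log_sqrt (mul_pos hlx hℓ).le, log_mul hx0.ne' hℓ.ne',
    log_mul hlx.ne' hℓ.ne']
  rw [mul_div_cancel_right₀ _ hℓ.ne', show (2 : ℝ) - 1 = 1 by norm_num, arcsin_one,
    show x - ℓ = -(ℓ - x) by ring, log_neg_eq_log]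
  ring

theorem headLouatPrimitive_sub_sub_eq {ℓ x : ℝ} (ε : ℝ) :
    headLouatPrimitive ℓ x (x - ε) - headLouatPrimitive ℓ x (x + ε) =
      headLouatRegular ℓ x (x - ε) - headLouatRegular ℓ x (x + ε) := by
  rw [headLouatPrimitive, headLouatPrimitive, sub_sub_cancel, show x - (x + ε) = -ε by ring,
    log_neg_eq_log]
  ring

theorem tendsto_headLouatPrimitive_sub_sub {ℓ x : ℝ} (hx : x ∈ Ioo 0 ℓ) :
    Tendsto (fun ε => headLouatPrimitive ℓ x (x - ε) - headLouatPrimitive ℓ x (x + ε))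
      (𝓝[>] 0) (𝓝 0) := by
  have hG : ContinuousAt (headLouatRegular ℓ x) x :=
    (continuousOn_headLouatRegular hx).continuousAt (Icc_mem_nhds hx.1 hx.2)
  have hl : Tendsto (fun ε : ℝ => x - ε) (𝓝 0) (𝓝 x) := by
    simpa using (continuous_sub_left x).tendsto 0
  have hr : Tendsto (fun ε : ℝ => x + ε) (𝓝 0) (𝓝 x) := by
    simpa using (continuous_const_add x).tendsto 0
  have h := (hG.tendsto.comp hl).sub (hG.tendsto.comp hr)
  rw [sub_self] at h
  simpa only [headLouatPrimitive_sub_sub_eq, Function.comp_apply] using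
    h.mono_left nhdsWithin_le_nhds

theorem stmt14_general (ℓ : ℝ) (x : ℝ) (hx : x ∈ Set.Ioo 0 ℓ) :
    Tendsto (fun ε : ℝ =>
        ∫ y in Set.Ioo 0 ℓ \ Set.Ioo (x - ε) (x + ε), Real.sqrt ((ℓ - y) / y) / (x - y))
      (nhdsWithin 0 (Set.Ioi 0)) (nhds Real.pi) := by
  have h := tendsto_setIntegral_Ioo_diff_Ioo hx.1 hx.2 (continuousOn_headLouatPrimitive hx)
    (fun y hy hyx => hasDerivAt_headLouatPrimitive hx hy hyx)
    (fun y hy => div_nonneg (sqrt_nonneg _) (sub_pos.2 hy.2).le)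
    (fun y hy => div_nonpos_of_nonneg_of_nonpos (sqrt_nonneg _) (sub_nonpos.2 hy.1.le))
    (tendsto_headLouatPrimitive_sub_sub hx)
  rwa [headLouatPrimitive_sub_eq_pi hx] at h

/-- (Head–Louat equilibrium identity, subcritical regime.) For `ℓ > 0`, the Head–Louat
pile-up density `ρ(y) = √((ℓ−y)/y)` on `(0,ℓ)` satisfies, for every `x ∈ (0,ℓ)`: the
Cauchy principal value of `∫₀^ℓ ρ(y)/(x−y) dy` exists and equals `π`, i.e. the limit as
`ε → 0⁺` of `∫_{(0,ℓ)∖(x−ε,x+ε)} √((ℓ−y)/y)/(x−y) dy` equals `π`. -/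
theorem stmt14 (ℓ : ℝ) (hℓ : 0 < ℓ) (x : ℝ) (hx : x ∈ Set.Ioo 0 ℓ) :
    Tendsto (fun ε : ℝ =>
        ∫ y in Set.Ioo 0 ℓ \ Set.Ioo (x - ε) (x + ε), Real.sqrt ((ℓ - y) / y) / (x - y))
      (nhdsWithin 0 (Set.Ioi 0)) (nhds Real.pi) :=
  stmt14_general ℓ x hx
end
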